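/- Let E = EuclideanSpace ℝ (Fin n) with world function Σ_E(P,Q) = ½‖P − Q‖². Let P₀,P₁,…,Pₙ ∈ E be such that the vectors eᵢ = Pᵢ − P₀ (i = 1,…,n) are linearly independent. Let g be the n×n Gram matrix g_{ik} = ⟨eᵢ,eₖ⟩, let h = g⁻¹, and define covariant coordinates xᵢ(P) = ⟨eᵢ, P − P₀⟩. Then for all P,Q ∈ E: Σ_E(P,Q) = ½ Σ_{i,k=1}^{n} h^{ik} (xᵢ(P) − xᵢ(Q))(xₖ(P) − xₖ(Q)). (Necessity of condition III: the σ-immanent coordinate expression of the Euclidean world function.) -/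

import Mathlib

open scoped Matrix

/-- σ-immanent coordinate expression of the Euclidean world function (condition III):
given a skeleton `P₀,…,Pₙ` with linearly independent vectors `eᵢ = Pᵢ − P₀`,
Gram matrix `g`, `h = g⁻¹`, and covariant coordinates `xᵢ(P) = ⟨eᵢ, P − P₀⟩`, one has
`Σ_E(P,Q) = ½ ∑ h^{ik}(xᵢ(P) − xᵢ(Q))(xₖ(P) − xₖ(Q))`. -/
theorem sigma_immanent_coordinate_expression
    (n : ℕ) (P : Fin (n + 1) → EuclideanSpace ℝ (Fin n))
    (hli : LinearIndependent ℝ (fun i : Fin n => P i.succ - P 0)) :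
    ∀ x y : EuclideanSpace ℝ (Fin n),
      (1 / 2) * ‖x - y‖ ^ 2 =
        (1 / 2) * ∑ i : Fin n, ∑ k : Fin n,
          (Matrix.of fun a b : Fin n =>
            (inner ℝ (P a.succ - P 0) (P b.succ - P 0) : ℝ))⁻¹ i k *
          ((inner ℝ (P i.succ - P 0) (x - P 0) : ℝ) -
            (inner ℝ (P i.succ - P 0) (y - P 0) : ℝ)) *
          ((inner ℝ (P k.succ - P 0) (x - P 0) : ℝ) -
            (inner ℝ (P k.succ - P 0) (y - P 0) : ℝ)) := by
  intro x y
  set e : Fin n → EuclideanSpace ℝ (Fin n) := fun i => P i.succ - P 0 with he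
  -- the matrix whose rows are the eᵢ
  set A : Matrix (Fin n) (Fin n) ℝ := Matrix.of fun i j => e i j with hA
  have hrows : LinearIndependent ℝ (fun i => A i) := by
    have := hli.map' (WithLp.linearEquiv 2 ℝ (Fin n → ℝ)).toLinearMap (LinearEquiv.ker _)
    exact this
  have hAunit : IsUnit A := Matrix.linearIndependent_rows_iff_isUnit.mp hrows
  have hAt : IsUnit A.transpose := (Matrix.isUnit_transpose A).mpr hAunit
  set v : Fin n → ℝ := fun j => (x - y : EuclideanSpace ℝ (Fin n)) j with hv
  -- Gram matrix is A * A.transpose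
  have hg : (Matrix.of fun a b : Fin n =>
      (inner ℝ (P a.succ - P 0) (P b.succ - P 0) : ℝ)) = A * A.transpose := by
    ext i k
    simp [Matrix.mul_apply, hA, PiLp.inner_apply, RCLike.inner_apply, he, mul_comm]
  -- differences of covariant coordinates are `A *ᵥ v`
  have hcoord : ∀ i : Fin n,
      ((inner ℝ (P i.succ - P 0) (x - P 0) : ℝ) -
        (inner ℝ (P i.succ - P 0) (y - P 0) : ℝ)) = (A *ᵥ v) i := by
    intro i
    rw [← inner_sub_right]
    have : (x - P 0) - (y - P 0) = (x - y : EuclideanSpace ℝ (Fin n)) := by abel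
    rw [this]
    simp [Matrix.mulVec, dotProduct, hA, PiLp.inner_apply, RCLike.inner_apply, hv,
      he, PiLp.sub_apply, mul_comm]
  have hnorm : ‖x - y‖ ^ 2 = v ⬝ᵥ v := by
    rw [← real_inner_self_eq_norm_sq]
    simp [PiLp.inner_apply, RCLike.inner_apply, dotProduct, hv]
    rw [EuclideanSpace.norm_sq_eq]
    simp [sq, Real.norm_eq_abs]
  -- main computation
  have hdet : IsUnit A.det := (Matrix.isUnit_iff_isUnit_det A).mp hAunit
  have hdetT : IsUnit A.transpose.det := (Matrix.isUnit_iff_isUnit_det A.transpose).mp hAt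
  have key : ∑ i : Fin n, ∑ k : Fin n,
      (A * A.transpose)⁻¹ i k * (A *ᵥ v) i * (A *ᵥ v) k = v ⬝ᵥ v := by
    have hsum : ∑ i : Fin n, ∑ k : Fin n,
        (A * A.transpose)⁻¹ i k * (A *ᵥ v) i * (A *ᵥ v) k
        = (A *ᵥ v) ⬝ᵥ ((A * A.transpose)⁻¹ *ᵥ (A *ᵥ v)) := by
      simp only [dotProduct, Matrix.mulVec, Finset.mul_sum, Finset.sum_mul]
      exact Finset.sum_congr rfl fun i _ => Finset.sum_congr rfl fun k _ =>
        Finset.sum_congr rfl fun a _ => Finset.sum_congr rfl fun b _ => by ring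
    have h1 : A⁻¹ *ᵥ (A *ᵥ v) = v := by
      rw [Matrix.mulVec_mulVec, Matrix.nonsing_inv_mul A hdet, Matrix.one_mulVec]
    rw [hsum, Matrix.mul_inv_rev, ← Matrix.mulVec_mulVec, h1,
      Matrix.dotProduct_mulVec, ← Matrix.vecMul_transpose, Matrix.vecMul_vecMul,
      Matrix.mul_nonsing_inv A.transpose hdetT, Matrix.vecMul_one]
  calc (1 / 2) * ‖x - y‖ ^ 2 = (1 / 2) * (v ⬝ᵥ v) := by rw [hnorm]
    _ = _ := by
        rw [← key, hg]
        congr 1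
        refine Finset.sum_congr rfl fun i _ => Finset.sum_congr rfl fun k _ => ?_
        rw [hcoord i, hcoord k]
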